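/- arXiv:1805.02640 — 5 statements merged into one kernel-verified Lean document; each statement's English description precedes it below -/
import Mathlib

section
/- Let Φ ∈ ℝ^{np×n} be (n-stacked) q-error detectable, let x ∈ ℝⁿ, e ∈ Σ_qⁿ, and ẑ = Φx + e. Define the residual r = ẑ − ΦΦ†ẑ, where Φ† is the Moore–Penrose pseudoinverse of Φ. Then e = 0 if and only if r = 0; moreover, when e = 0 the vector x is exactly recovered as x = Φ†ẑ. -/
open scoped Classical
open Finset Matrix

noncomputable section

namespace SecureEst

variable {n p : ℕ}

/-- The `i`-th `n`-block of an `n`-stacked vector. -/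
def blk (z : Fin p × Fin n → ℝ) (i : Fin p) : Fin n → ℝ := fun j => z (i, j)

/-- The `n`-stacked support of a stacked vector. -/
def blockSupp (z : Fin p × Fin n → ℝ) : Finset (Fin p) :=
  Finset.univ.filter fun i => blk z i ≠ 0

/-- The `n`-stacked ℓ⁰ "norm": number of nonzero blocks. -/
def l0n (z : Fin p × Fin n → ℝ) : ℕ := (blockSupp z).card

/-- `n`-stacked `q`-sparsity: membership in `Σ_qⁿ`. -/
def Sparse (q : ℕ) (z : Fin p × Fin n → ℝ) : Prop := l0n z ≤ q

/-- Euclidean (ℓ²) norm of a real vector. -/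
def enorm {m : Type*} [Fintype m] (x : m → ℝ) : ℝ := Real.sqrt (∑ i, x i ^ 2)

/-- `Φ_{Λⁿ}`: zero out the row-blocks of `Φ` outside `Λ`. -/
def zeroB (Λ : Finset (Fin p)) (Φ : Matrix (Fin p × Fin n) (Fin n) ℝ) :
    Matrix (Fin p × Fin n) (Fin n) ℝ :=
  fun ij k => if ij.1 ∈ Λ then Φ ij k else 0

/-- `z_{Λⁿ}`: zero out the blocks of a stacked vector outside `Λ`. -/
def zeroV (Λ : Finset (Fin p)) (z : Fin p × Fin n → ℝ) : Fin p × Fin n → ℝ :=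
  fun ij => if ij.1 ∈ Λ then z ij else 0

/-- `Φ_{Γᵢⁿ}`: the `i`-th row-block of `Φ`. -/
def rowBlk (Φ : Matrix (Fin p × Fin n) (Fin n) ℝ) (i : Fin p) :
    Matrix (Fin n) (Fin n) ℝ := fun j k => Φ (i, j) k

/-- Moore–Penrose pseudoinverse (full-column-rank formula `(MᵀM)⁻¹Mᵀ`). -/
def pinv {m k : Type*} [Fintype m] [Fintype k] [DecidableEq k]
    (M : Matrix m k ℝ) : Matrix k m ℝ := (Mᵀ * M)⁻¹ * Mᵀ

/-- Spectral norm (largest singular value) of a real matrix. -/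
def specNorm {m k : Type*} [Fintype m] [Fintype k] (M : Matrix m k ℝ) : ℝ :=
  sSup {r | ∃ x : k → ℝ, enorm x = 1 ∧ r = enorm (M.mulVec x)}

/-- Minimum singular value of a (tall) real matrix. -/
def sigmaMin {m k : Type*} [Fintype m] [Fintype k] (M : Matrix m k ℝ) : ℝ :=
  sInf {r | ∃ x : k → ℝ, enorm x = 1 ∧ r = enorm (M.mulVec x)}

/-- `(n-stacked) q`-error detectability. -/
def ErrDetectable (Φ : Matrix (Fin p × Fin n) (Fin n) ℝ) (q : ℕ) : Prop :=
  ∀ x x' : Fin n → ℝ, ∀ e : Fin p × Fin n → ℝ,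
    Sparse q e → Φ.mulVec x + e = Φ.mulVec x' → x = x'

/-- `(n-stacked) q`-error correctability. -/
def ErrCorrectable (Φ : Matrix (Fin p × Fin n) (Fin n) ℝ) (q : ℕ) : Prop :=
  ∀ x₁ x₂ : Fin n → ℝ, ∀ e₁ e₂ : Fin p × Fin n → ℝ,
    Sparse q e₁ → Sparse q e₂ →
      Φ.mulVec x₁ + e₁ = Φ.mulVec x₂ + e₂ → x₁ = x₂

/-- `(n-stacked)` cospark. -/
def cosparkN (Φ : Matrix (Fin p × Fin n) (Fin n) ℝ) : ℕ :=
  sInf {m : ℕ | ∃ x : Fin n → ℝ, x ≠ 0 ∧ m = l0n (Φ.mulVec x)}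

/-- `ρ_{p,q}(Φ)`. -/
def rho (Φ : Matrix (Fin p × Fin n) (Fin n) ℝ) (q : ℕ) : ℝ :=
  sInf {r | ∃ Λ : Finset (Fin p), Λ.card = p - q ∧ r = sigmaMin (zeroB Λ Φ)}

/-- `η_{p,q}(Φ)`. -/
def eta (Φ : Matrix (Fin p × Fin n) (Fin n) ℝ) (q : ℕ) : ℝ :=
  sSup {r | ∃ Λ : Finset (Fin p), Λ.card = p - q ∧
    ∃ i : Fin p, i ∉ Λ ∧ r = specNorm (rowBlk Φ i * pinv (zeroB Λ Φ))}

/-- `κ^d_{p,q}(Φ)`. -/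
def kappaD (Φ : Matrix (Fin p × Fin n) (Fin n) ℝ) (q : ℕ) : ℝ :=
  (Real.sqrt (p : ℝ) + 1) * Real.sqrt ((p - q : ℕ) : ℝ) / rho Φ q

/-- `κ^e_{p,q}(Φ)`. -/
def kappaE (Φ : Matrix (Fin p × Fin n) (Fin n) ℝ) (q : ℕ) : ℝ :=
  (eta Φ q * Real.sqrt ((p - q : ℕ) : ℝ) + 1) * (Real.sqrt (p : ℝ) + 1)

/-- The finite candidate set `F_{p,r}(ẑ)`. -/
def Fset (Φ : Matrix (Fin p × Fin n) (Fin n) ℝ) (r : ℕ) (z : Fin p × Fin n → ℝ) :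
    Set (Fin n → ℝ) :=
  {χ | ∃ Λ : Finset (Fin p), Λ.card = p - r ∧
    χ = (pinv (zeroB Λ Φ)).mulVec (zeroV Λ z)}

/-- `η'_{p,q,r}(Φ)`. -/
def eta' (Φ : Matrix (Fin p × Fin n) (Fin n) ℝ) (q r : ℕ) : ℝ :=
  sSup {a | ∃ Λ : Finset (Fin p), Λ.card = p - q ∧
    a = sInf {b | ∃ Λ' : Finset (Fin p), Λ' ⊆ Λ ∧ Λ'.card = p - r ∧
      b = sSup {c | ∃ i ∈ Λ \ Λ',
        c = specNorm (rowBlk Φ i * pinv (zeroB Λ' Φ))}}}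

/-- `ϑ_{p,q,r}(Φ)`. -/
def theta (Φ : Matrix (Fin p × Fin n) (Fin n) ℝ) (q r : ℕ) : ℝ :=
  max (eta' Φ q r * Real.sqrt ((p - r : ℕ) : ℝ) + 1) (Real.sqrt ((p - r : ℕ) : ℝ))

/-- `κ^c_{p,q,r}(Φ)`. -/
def kappaC (Φ : Matrix (Fin p × Fin n) (Fin n) ℝ) (q r : ℕ) : ℝ :=
  (theta Φ q r + 1) * Real.sqrt ((p - 2 * q : ℕ) : ℝ) / rho Φ (2 * q)

/-- `κ^{c'}_{p,q,r}(Φ)`. -/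
def kappaC' (Φ : Matrix (Fin p × Fin n) (Fin n) ℝ) (q r : ℕ) : ℝ :=
  (theta Φ q r - 1) / sSup {c | ∃ i : Fin p, c = specNorm (rowBlk Φ i)}

/-- Stacked observability matrix `G` with row-blocks `Gᵢ = [cᵢᵀ (cᵢA)ᵀ ⋯ (cᵢAⁿ⁻¹)ᵀ]ᵀ`. -/
def obsG (A : Matrix (Fin n) (Fin n) ℝ) (C : Matrix (Fin p) (Fin n) ℝ) :
    Matrix (Fin p × Fin n) (Fin n) ℝ :=
  fun ij k => (C * A ^ (ij.2 : ℕ)) ij.1 k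

/-- `C_Λ`: zero out the rows of `C` outside `Λ`. -/
def zeroRows (Λ : Finset (Fin p)) (C : Matrix (Fin p) (Fin n) ℝ) :
    Matrix (Fin p) (Fin n) ℝ :=
  fun i k => if i ∈ Λ then C i k else 0

/-- Observability of the pair `(A, C)`: the observability matrix has full column rank. -/
def Observable (A : Matrix (Fin n) (Fin n) ℝ) (C : Matrix (Fin p) (Fin n) ℝ) : Prop :=
  (obsG A C).rank = n

/-- `q`-redundant observability. -/
def RedObservable (A : Matrix (Fin n) (Fin n) ℝ) (C : Matrix (Fin p) (Fin n) ℝ)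
    (q : ℕ) : Prop :=
  ∀ Λ : Finset (Fin p), p - q ≤ Λ.card → Observable A (zeroRows Λ C)

/-- Euclidean norm of a complex vector. -/
def enormC {m : Type*} [Fintype m] (v : m → ℂ) : ℝ :=
  Real.sqrt (∑ i, ‖v i‖ ^ 2)

/-- The set `V(A)` of normalized complex eigenvectors of a real matrix `A`. -/
def eigSet (A : Matrix (Fin n) (Fin n) ℝ) : Set (Fin n → ℂ) :=
  {v | (∃ μ : ℂ, (A.map Complex.ofReal).mulVec v = μ • v) ∧ enormC v = 1}

/-- ℓ⁰ norm of a complex vector. -/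
def l0C (y : Fin p → ℂ) : ℕ := (Finset.univ.filter fun i => y i ≠ 0).card

/-- `n`-stacked ℓ⁰ norm of a complex stacked vector. -/
def l0nC (z : Fin p × Fin n → ℂ) : ℕ :=
  (Finset.univ.filter fun i => (fun j => z (i, j)) ≠ (0 : Fin n → ℂ)).card

/-- The dynamic security index `α_d(A, C)`. -/
def alphaD (A : Matrix (Fin n) (Fin n) ℝ) (C : Matrix (Fin p) (Fin n) ℝ) : ℕ :=
  sInf {m : ℕ | ∃ v ∈ eigSet A, m = l0C ((C.map Complex.ofReal).mulVec v)}

/-! Detectability against the zero error makes `Φ` injective, so `Φ†` is a left inverse of `Φ`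
and the residual vanishes exactly when `ẑ` lies in the range of `Φ`. If `Φx + e = Φy`, then
detectability forces `x = y`, hence `e = 0`. -/

theorem blockSupp_zero : blockSupp (0 : Fin p × Fin n → ℝ) = ∅ :=
  Finset.filter_eq_empty_iff.mpr fun _ _ h => h rfl

theorem sparse_zero (q : ℕ) : Sparse q (0 : Fin p × Fin n → ℝ) := by
  simp [Sparse, l0n, blockSupp_zero]

theorem ErrDetectable.injective_mulVec {Φ : Matrix (Fin p × Fin n) (Fin n) ℝ} {q : ℕ}
    (hΦ : ErrDetectable Φ q) : Function.Injective Φ.mulVec :=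
  fun x x' h => hΦ x x' 0 (sparse_zero q) (by rw [add_zero, h])

theorem pinv_mul_self_of_injective {m k : Type*} [Fintype m] [Fintype k] [DecidableEq k]
    {M : Matrix m k ℝ} (hM : Function.Injective M.mulVec) : pinv M * M = 1 := by
  have hGram : IsUnit (Mᵀ * M) := by
    rwa [← mulVec_injective_iff_isUnit, ← coe_mulVecLin, ← LinearMap.ker_eq_bot,
      ker_mulVecLin_transpose_mul_self, LinearMap.ker_eq_bot]
  rw [pinv, Matrix.mul_assoc, nonsing_inv_mul _ ((isUnit_iff_isUnit_det _).mp hGram)]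

theorem pinv_mulVec_mulVec_of_injective {m k : Type*} [Fintype m] [Fintype k] [DecidableEq k]
    {M : Matrix m k ℝ} (hM : Function.Injective M.mulVec) (y : k → ℝ) :
    pinv M *ᵥ (M *ᵥ y) = y := by
  rw [mulVec_mulVec, pinv_mul_self_of_injective hM, one_mulVec]

end SecureEst
open SecureEst in
/-- Lemma 1: with noiseless measurement `zhat = Φx + e` and residual
`r = zhat − ΦΦ†zhat`, one has `e = 0 ↔ r = 0`; and when `e = 0`, `x = Φ†zhat`. -/
theorem residual_detection_noiseless {n p : ℕ}
    (Φ : Matrix (Fin p × Fin n) (Fin n) ℝ) (q : ℕ)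
    (hdet : ErrDetectable Φ q)
    (x : Fin n → ℝ) (e : Fin p × Fin n → ℝ) (he : Sparse q e)
    (zhat r : Fin p × Fin n → ℝ)
    (hz : zhat = Φ.mulVec x + e)
    (hr : r = zhat - Φ.mulVec ((pinv Φ).mulVec zhat)) :
    (e = 0 ↔ r = 0) ∧ (e = 0 → x = (pinv Φ).mulVec zhat) := by
  have hrecover : e = 0 → x = pinv Φ *ᵥ zhat := by
    rintro rfl
    rw [hz, add_zero, pinv_mulVec_mulVec_of_injective hdet.injective_mulVec]
  refine ⟨⟨fun he0 => ?_, fun hr0 => ?_⟩, hrecover⟩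
  · rw [hr, ← hrecover he0, hz, he0, add_zero, sub_self]
  · have hfit : Φ *ᵥ x + e = Φ *ᵥ (pinv Φ *ᵥ zhat) := hz ▸ sub_eq_zero.mp (hr ▸ hr0)
    rw [← hdet _ _ e he hfit] at hfit
    exact add_eq_left.mp hfit
end
end

section
/- Let Φ ∈ ℝ^{np×n} be (n-stacked) q-error correctable, x ∈ ℝⁿ, e ∈ Σ_qⁿ, and ẑ = Φx + e. Let r be any integer with q ≤ r ≤ 2q, and define the finite set F_{p,r}(ẑ) := {(Φ_{Λⁿ})†ẑ_{Λⁿ} ∈ ℝⁿ : Λ ⊆ {1,…,p}, |Λ| = p−r}. Then x belongs to F_{p,r}(ẑ) and x is the unique minimizer over χ ∈ F_{p,r}(ẑ) of ‖ẑ − Φχ‖_{0ⁿ}; equivalently, x is the unique minimizer over χ ∈ F_{p,r}(ẑ) of the number of indices i ∈ {1,…,p} with ‖ẑ_i − Φ_{Γᵢⁿ}χ‖₂ > 0. -/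
/-! If `y ≠ 0`, then `Φ y` has more than `2q` nonzero blocks: otherwise splitting its
support into two parts of size at most `q` gives two `q`-sparse errors that confuse `y`
with `0`. Hence for any `Λ` of size `p - r ≥ p - 2q` avoiding the support of `e`,
`Φ_{Λⁿ}` is injective and `ẑ_{Λⁿ} = Φ_{Λⁿ} x`, so the pseudoinverse returns `x`.
The residual of `x` is `e`, which is `q`-sparse, and by correctability `x` is the only
vector whose residual is `q`-sparse; so it is the unique minimizer. -/

open scoped Classical
open Finset Matrix

noncomputable section

namespace SecureEst

variable {n p : ℕ}

theorem enorm_pos_iff {m : Type*} [Fintype m] {v : m → ℝ} : 0 < enorm v ↔ v ≠ 0 := by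
  rw [enorm, Real.sqrt_pos, Finset.sum_pos_iff_of_nonneg fun i _ => sq_nonneg (v i),
    Function.ne_iff]
  simp only [Finset.mem_univ, true_and, sq_pos_iff, Pi.zero_apply]

theorem pinv_mulVec_mulVec {m k : Type*} [Fintype m] [Fintype k] [DecidableEq k]
    {M : Matrix m k ℝ} (hM : Function.Injective M.mulVec) (x : k → ℝ) :
    pinv M *ᵥ (M *ᵥ x) = x := by
  have hMtM : Function.Injective (Mᵀ * M).mulVec := by
    rw [← coe_mulVecLin, ← LinearMap.ker_eq_bot, ker_mulVecLin_transpose_mul_self,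
      LinearMap.ker_eq_bot, coe_mulVecLin]
    exact hM
  rw [pinv, mulVec_mulVec, Matrix.mul_assoc,
    nonsing_inv_mul _ ((isUnit_iff_isUnit_det _).mp (mulVec_injective_iff_isUnit.mp hMtM)),
    one_mulVec]

theorem blockSupp_eq_empty {z : Fin p × Fin n → ℝ} : blockSupp z = ∅ ↔ z = 0 := by
  simp [blockSupp, Finset.filter_eq_empty_iff, blk, funext_iff]

theorem blockSupp_neg (z : Fin p × Fin n → ℝ) : blockSupp (-z) = blockSupp z := by
  simp only [blockSupp, show ∀ i, blk (-z) i = -blk z i from fun _ => rfl, neg_ne_zero]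

theorem blk_zeroV (S : Finset (Fin p)) (z : Fin p × Fin n → ℝ) (i : Fin p) :
    blk (zeroV S z) i = if i ∈ S then blk z i else 0 := by
  split_ifs with h <;> ext j <;> simp [blk, zeroV, h]

theorem blockSupp_zeroV (S : Finset (Fin p)) (z : Fin p × Fin n → ℝ) :
    blockSupp (zeroV S z) = S ∩ blockSupp z := by
  ext i
  by_cases h : i ∈ S <;> simp [blockSupp, blk_zeroV, h]

theorem zeroV_add (S : Finset (Fin p)) (z w : Fin p × Fin n → ℝ) :
    zeroV S (z + w) = zeroV S z + zeroV S w := by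
  ext ij
  by_cases h : ij.1 ∈ S <;> simp [zeroV, h]

theorem zeroV_add_zeroV_compl (S : Finset (Fin p)) (z : Fin p × Fin n → ℝ) :
    zeroV S z + zeroV Sᶜ z = z := by
  ext ij
  by_cases h : ij.1 ∈ S <;> simp [zeroV, h]

theorem zeroB_mulVec (Λ : Finset (Fin p)) (Φ : Matrix (Fin p × Fin n) (Fin n) ℝ)
    (y : Fin n → ℝ) : zeroB Λ Φ *ᵥ y = zeroV Λ (Φ *ᵥ y) := by
  ext ij
  by_cases h : ij.1 ∈ Λ <;> simp [zeroB, zeroV, mulVec, dotProduct, h]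

theorem card_filter_enorm_pos_eq_l0n (Φ : Matrix (Fin p × Fin n) (Fin n) ℝ)
    (z : Fin p × Fin n → ℝ) (χ : Fin n → ℝ) :
    (univ.filter fun i => 0 < enorm (blk z i - (rowBlk Φ i) *ᵥ χ)).card =
      l0n (z - Φ *ᵥ χ) := by
  simp only [enorm_pos_iff]
  rfl

namespace ErrCorrectable

variable {Φ : Matrix (Fin p × Fin n) (Fin n) ℝ} {q : ℕ}

theorem two_mul_lt_l0n_mulVec (hc : ErrCorrectable Φ q) {y : Fin n → ℝ} (hy : y ≠ 0) :
    2 * q < l0n (Φ *ᵥ y) := by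
  by_contra! hle
  set w := Φ *ᵥ y
  obtain ⟨S, hSw, hScard⟩ := exists_subset_card_eq (min_le_left (blockSupp w).card q)
  have h₁ : Sparse q (-zeroV S w) := by
    rw [Sparse, l0n, blockSupp_neg, blockSupp_zeroV, inter_eq_left.mpr hSw, hScard]
    exact min_le_right _ _
  have h₂ : Sparse q (zeroV Sᶜ w) := by
    rw [Sparse, l0n, blockSupp_zeroV, inter_comm, ← sdiff_eq_inter_compl,
      card_sdiff_of_subset hSw]
    unfold l0n at hle
    omega
  refine hy (hc y 0 _ _ h₁ h₂ ?_)
  rw [mulVec_zero, zero_add, ← sub_eq_add_neg, sub_eq_iff_eq_add']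
  exact (zeroV_add_zeroV_compl S w).symm

theorem injective_zeroB_mulVec (hc : ErrCorrectable Φ q) {Λ : Finset (Fin p)}
    (hΛ : Λᶜ.card ≤ 2 * q) : Function.Injective (zeroB Λ Φ).mulVec := by
  rw [← coe_mulVecLin, ← LinearMap.ker_eq_bot, LinearMap.ker_eq_bot']
  intro y hy
  by_contra hy0
  have hdisj : Disjoint Λ (blockSupp (Φ *ᵥ y)) := by
    rw [disjoint_iff_inter_eq_empty, ← blockSupp_zeroV, blockSupp_eq_empty, ← zeroB_mulVec]
    exact hy
  have hsupp := card_le_card (subset_compl_iff_disjoint_left.mpr hdisj)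
  have hlarge := hc.two_mul_lt_l0n_mulVec hy0
  unfold l0n at hlarge
  omega

theorem mem_Fset (hc : ErrCorrectable Φ q) {r : ℕ} (hqr : q ≤ r) (hr2q : r ≤ 2 * q)
    {x : Fin n → ℝ} {e : Fin p × Fin n → ℝ} (he : Sparse q e) :
    x ∈ Fset Φ r (Φ *ᵥ x + e) := by
  have hcompl : p - r ≤ (blockSupp e)ᶜ.card := by
    rw [card_compl, Fintype.card_fin]
    unfold Sparse l0n at he
    omega
  obtain ⟨Λ, hΛe, hΛcard⟩ := exists_subset_card_eq hcompl
  have hzero : zeroV Λ e = 0 := by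
    rw [← blockSupp_eq_empty, blockSupp_zeroV, ← disjoint_iff_inter_eq_empty]
    exact subset_compl_iff_disjoint_right.mp hΛe
  have hΛ : Λᶜ.card ≤ 2 * q := by
    rw [card_compl, Fintype.card_fin, hΛcard]
    omega
  refine ⟨Λ, hΛcard, ?_⟩
  rw [zeroV_add, hzero, add_zero, ← zeroB_mulVec,
    pinv_mulVec_mulVec (hc.injective_zeroB_mulVec hΛ)]

theorem eq_of_l0n_sub_mulVec_le (hc : ErrCorrectable Φ q) {x χ : Fin n → ℝ}
    {e : Fin p × Fin n → ℝ} (he : Sparse q e) (hχ : l0n (Φ *ᵥ x + e - Φ *ᵥ χ) ≤ q) :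
    χ = x :=
  (hc x χ e _ he hχ (add_sub_cancel _ _).symm).symm

end ErrCorrectable

end SecureEst

open SecureEst in
/-- Theorem 2: for `zhat = Φx + e` with `q`-error correctable `Φ` and
`q ≤ r ≤ 2q`, the true `x` belongs to the finite set `F_{p,r}(zhat)` and is the unique
minimizer over it of `‖zhat − Φχ‖_{0ⁿ}`, equivalently of the number of blocks `i` with
`‖zhatᵢ − Φ_{Γᵢⁿ}χ‖₂ > 0`. -/
theorem finite_l0_minimization {n p : ℕ}
    (Φ : Matrix (Fin p × Fin n) (Fin n) ℝ) (q r : ℕ)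
    (hc : ErrCorrectable Φ q) (hqr : q ≤ r) (hr2q : r ≤ 2 * q)
    (x : Fin n → ℝ) (e : Fin p × Fin n → ℝ) (he : Sparse q e)
    (zhat : Fin p × Fin n → ℝ) (hz : zhat = Φ.mulVec x + e) :
    x ∈ Fset Φ r zhat ∧
    (∀ χ ∈ Fset Φ r zhat, l0n (zhat - Φ.mulVec x) ≤ l0n (zhat - Φ.mulVec χ)) ∧
    (∀ χ ∈ Fset Φ r zhat,
      (∀ χ' ∈ Fset Φ r zhat, l0n (zhat - Φ.mulVec χ) ≤ l0n (zhat - Φ.mulVec χ')) → χ = x) ∧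
    (∀ χ ∈ Fset Φ r zhat,
      (Finset.univ.filter fun i : Fin p =>
          0 < SecureEst.enorm (blk zhat i - (rowBlk Φ i).mulVec x)).card ≤
        (Finset.univ.filter fun i : Fin p =>
          0 < SecureEst.enorm (blk zhat i - (rowBlk Φ i).mulVec χ)).card) ∧
    (∀ χ ∈ Fset Φ r zhat,
      (∀ χ' ∈ Fset Φ r zhat,
        (Finset.univ.filter fun i : Fin p =>
            0 < SecureEst.enorm (blk zhat i - (rowBlk Φ i).mulVec χ)).card ≤
          (Finset.univ.filter fun i : Fin p =>
            0 < SecureEst.enorm (blk zhat i - (rowBlk Φ i).mulVec χ')).card) → χ = x) := by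
  subst hz
  have hx : x ∈ Fset Φ r (Φ *ᵥ x + e) := hc.mem_Fset hqr hr2q he
  have hres : l0n (Φ *ᵥ x + e - Φ *ᵥ x) ≤ q := by rwa [add_sub_cancel_left]
  have hmin : ∀ χ ∈ Fset Φ r (Φ *ᵥ x + e),
      l0n (Φ *ᵥ x + e - Φ *ᵥ x) ≤ l0n (Φ *ᵥ x + e - Φ *ᵥ χ) := fun χ _ => by
    by_contra! hlt
    rw [hc.eq_of_l0n_sub_mulVec_le he (hlt.le.trans hres)] at hlt
    exact lt_irrefl _ hlt
  have huniq : ∀ χ ∈ Fset Φ r (Φ *ᵥ x + e),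
      (∀ χ' ∈ Fset Φ r (Φ *ᵥ x + e),
        l0n (Φ *ᵥ x + e - Φ *ᵥ χ) ≤ l0n (Φ *ᵥ x + e - Φ *ᵥ χ')) → χ = x :=
    fun χ _ hχ => hc.eq_of_l0n_sub_mulVec_le he ((hχ x hx).trans hres)
  simp only [card_filter_enorm_pos_eq_l0n]
  exact ⟨hx, hmin, huniq, hmin, huniq⟩
end
end

section
/- Let Φ ∈ ℝ^{np×n} be (n-stacked) q-error correctable, x ∈ ℝⁿ, e ∈ Σ_qⁿ, v ∈ ℝ^{np} with ‖v_i‖₂ ≤ v_max for all blocks i, ẑ = Φx + e + v, and fix an integer r with q ≤ r ≤ 2q and v'_max := ϑ_{p,q,r}(Φ)·v_max. If a vector x̂ ∈ ℝⁿ satisfies |{i ∈ {1,…,p} : ‖ẑ_i − Φ_{Γᵢⁿ}x̂‖₂ > v'_max}| > q, then ‖x̂ − x‖₂ > κ^{c'}_{p,q,r}(Φ)·v_max, where κ^{c'}_{p,q,r}(Φ) := (ϑ_{p,q,r}(Φ) − 1)/max_{i ∈ {1,…,p}} ‖Φ_{Γᵢⁿ}‖₂. -/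
open scoped Classical
open Finset Matrix

noncomputable section

/-!
Since `e` has at most `q` nonzero blocks while more than `q` blocks carry a residual larger than
`ϑ v_max`, some attack-free block `i` has a large residual. On that block the residual is
`Φ_{Γᵢⁿ}(x − x̂) + vᵢ`, so `(ϑ − 1) v_max < ‖Φ_{Γᵢⁿ}‖₂ ‖x̂ − x‖₂ ≤ maxⱼ ‖Φ_{Γⱼⁿ}‖₂ ‖x̂ − x‖₂`.
As `ϑ ≥ 1`, the left side is nonnegative, so the maximum is positive and we may divide by it.
-/

namespace SecureEst

section EuclideanNorm

variable {m k : Type*} [Fintype m] [Fintype k]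

lemma enorm_eq_norm_toLp (x : m → ℝ) : enorm x = ‖WithLp.toLp 2 x‖ := by
  rw [EuclideanSpace.norm_eq]
  simp [enorm, sq_abs]

lemma enorm_nonneg (x : m → ℝ) : 0 ≤ enorm x :=
  Real.sqrt_nonneg _

lemma enorm_pos {x : m → ℝ} (hx : x ≠ 0) : 0 < enorm x := by
  rw [enorm_eq_norm_toLp, norm_pos_iff]
  exact fun h => hx (congrArg WithLp.ofLp h)

lemma enorm_add_le (x y : m → ℝ) : enorm (x + y) ≤ enorm x + enorm y := by
  simpa only [enorm_eq_norm_toLp, WithLp.toLp_add] using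
    norm_add_le (WithLp.toLp 2 x) (WithLp.toLp 2 y)

lemma enorm_sub_rev (x y : m → ℝ) : enorm (x - y) = enorm (y - x) := by
  simpa only [enorm_eq_norm_toLp, WithLp.toLp_sub] using
    norm_sub_rev (WithLp.toLp 2 x) (WithLp.toLp 2 y)

lemma enorm_smul (c : ℝ) (x : m → ℝ) : enorm (c • x) = |c| * enorm x := by
  simpa only [enorm_eq_norm_toLp, WithLp.toLp_smul, Real.norm_eq_abs] using
    norm_smul c (WithLp.toLp 2 x)

lemma enorm_mulVec_le_frobenius (M : Matrix m k ℝ) (x : k → ℝ) :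
    enorm (M *ᵥ x) ≤ Real.sqrt (∑ i, ∑ j, M i j ^ 2) * enorm x := by
  rw [enorm, enorm, ← Real.sqrt_mul (by positivity), Finset.sum_mul]
  refine Real.sqrt_le_sqrt (Finset.sum_le_sum fun i _ => ?_)
  simpa [Matrix.mulVec, dotProduct] using Finset.sum_mul_sq_le_sq_mul_sq Finset.univ (M i) x

lemma specNorm_bddAbove (M : Matrix m k ℝ) :
    BddAbove {r | ∃ x : k → ℝ, enorm x = 1 ∧ r = enorm (M *ᵥ x)} := by
  refine ⟨Real.sqrt (∑ i, ∑ j, M i j ^ 2), ?_⟩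
  rintro r ⟨x, hx, rfl⟩
  simpa [hx] using enorm_mulVec_le_frobenius M x

lemma enorm_mulVec_le (M : Matrix m k ℝ) (x : k → ℝ) :
    enorm (M *ᵥ x) ≤ specNorm M * enorm x := by
  obtain rfl | hx := eq_or_ne x 0
  · simp [enorm]
  have hxn := enorm_pos hx
  have hscale : |(enorm x)⁻¹| = (enorm x)⁻¹ := abs_of_pos (inv_pos.2 hxn)
  have hunit : enorm ((enorm x)⁻¹ • x) = 1 := by
    rw [enorm_smul, hscale, inv_mul_cancel₀ hxn.ne']
  have hle := le_csSup (specNorm_bddAbove M) ⟨_, hunit, rfl⟩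
  rwa [mulVec_smul, enorm_smul, hscale, inv_mul_le_iff₀ hxn, mul_comm] at hle

end EuclideanNorm

variable {n p : ℕ}

lemma one_le_theta (Φ : Matrix (Fin p × Fin n) (Fin n) ℝ) (q r : ℕ) : 1 ≤ theta Φ q r := by
  unfold theta
  rcases le_or_gt p r with h | h
  · simp [Nat.sub_eq_zero_of_le h]
  · have h1 : (1 : ℝ) ≤ ((p - r : ℕ) : ℝ) := by exact_mod_cast Nat.sub_pos_of_lt h
    exact (Real.one_le_sqrt.2 h1).trans (le_max_right _ _)

lemma specNorm_rowBlk_le_sSup (Φ : Matrix (Fin p × Fin n) (Fin n) ℝ) (i : Fin p) :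
    specNorm (rowBlk Φ i) ≤ sSup {c | ∃ i : Fin p, c = specNorm (rowBlk Φ i)} := by
  have hrange :
      {c | ∃ i : Fin p, c = specNorm (rowBlk Φ i)} = Set.range (specNorm ∘ rowBlk Φ) := by
    ext c; simp [eq_comm]
  exact le_csSup (hrange ▸ (Set.finite_range _).bddAbove) ⟨i, rfl⟩

lemma blk_mulVec (Φ : Matrix (Fin p × Fin n) (Fin n) ℝ) (x : Fin n → ℝ) (i : Fin p) :
    blk (Φ *ᵥ x) i = rowBlk Φ i *ᵥ x :=
  rfl

lemma exists_mem_blk_eq_zero_of_sparse {q : ℕ} {e : Fin p × Fin n → ℝ} (he : Sparse q e)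
    {T : Finset (Fin p)} (hT : q < T.card) : ∃ i ∈ T, blk e i = 0 := by
  by_contra! h
  have hsub : T ⊆ blockSupp e := fun i hi => Finset.mem_filter.2 ⟨Finset.mem_univ i, h i hi⟩
  exact absurd ((Finset.card_le_card hsub).trans he) (not_le.2 hT)

lemma enorm_residual_le_of_blk_eq_zero (Φ : Matrix (Fin p × Fin n) (Fin n) ℝ)
    {x xhat : Fin n → ℝ} {e v : Fin p × Fin n → ℝ} {i : Fin p} (hei : blk e i = 0) :
    enorm (blk (Φ *ᵥ x + e + v) i - rowBlk Φ i *ᵥ xhat)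
      ≤ specNorm (rowBlk Φ i) * enorm (xhat - x) + enorm (blk v i) := by
  have hres : blk (Φ *ᵥ x + e + v) i - rowBlk Φ i *ᵥ xhat
      = rowBlk Φ i *ᵥ (x - xhat) + blk v i := by
    have hsplit : blk (Φ *ᵥ x + e + v) i = blk (Φ *ᵥ x) i + blk e i + blk v i := rfl
    rw [hsplit, hei, blk_mulVec, mulVec_sub]
    abel
  calc enorm (blk (Φ *ᵥ x + e + v) i - rowBlk Φ i *ᵥ xhat)
      ≤ enorm (rowBlk Φ i *ᵥ (x - xhat)) + enorm (blk v i) := hres ▸ enorm_add_le _ _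
    _ ≤ specNorm (rowBlk Φ i) * enorm (xhat - x) + enorm (blk v i) := by
      rw [SecureEst.enorm_sub_rev xhat x]
      exact add_le_add_left (enorm_mulVec_le _ _) _

end SecureEst

open SecureEst in
theorem many_large_residuals_implies_far_general {n p : ℕ}
    (Φ : Matrix (Fin p × Fin n) (Fin n) ℝ) (q r : ℕ)
    (x : Fin n → ℝ) (e v : Fin p × Fin n → ℝ) (vmax : ℝ)
    (he : Sparse q e) (hv : ∀ i : Fin p, SecureEst.enorm (blk v i) ≤ vmax)
    (zhat : Fin p × Fin n → ℝ) (hz : zhat = Φ.mulVec x + e + v)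
    (xhat : Fin n → ℝ)
    (hcount : q < (Finset.univ.filter fun i : Fin p =>
        theta Φ q r * vmax < SecureEst.enorm (blk zhat i - (rowBlk Φ i).mulVec xhat)).card) :
    kappaC' Φ q r * vmax < SecureEst.enorm (xhat - x) := by
  subst hz
  obtain ⟨i, hiT, hei⟩ := exists_mem_blk_eq_zero_of_sparse he hcount
  set S := sSup {c | ∃ i : Fin p, c = specNorm (rowBlk Φ i)}
  have hθ := one_le_theta Φ q r
  have hvmax : 0 ≤ vmax := (enorm_nonneg _).trans (hv i)
  have hlt : (theta Φ q r - 1) * vmax < S * SecureEst.enorm (xhat - x) := by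
    have hlarge := (Finset.mem_filter.1 hiT).2
    have hsmall := enorm_residual_le_of_blk_eq_zero Φ (x := x) (xhat := xhat) (v := v) hei
    have hSi := mul_le_mul_of_nonneg_right (specNorm_rowBlk_le_sSup Φ i) (enorm_nonneg (xhat - x))
    linarith [hv i]
  have hS : 0 < S :=
    pos_of_mul_pos_left ((mul_nonneg (sub_nonneg.2 hθ) hvmax).trans_lt hlt) (enorm_nonneg _)
  rw [kappaC', div_mul_eq_mul_div, div_lt_iff₀ hS, mul_comm _ S]
  exact hlt

open SecureEst in
/-- Theorem 4.(ii): if `xhat` satisfies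
`|{i : ‖zhatᵢ − Φ_{Γᵢⁿ}xhat‖₂ > v'_max}| > q` then `‖xhat − x‖₂ > κ^{c'}_{p,q,r}(Φ) v_max`. -/
theorem many_large_residuals_implies_far {n p : ℕ}
    (Φ : Matrix (Fin p × Fin n) (Fin n) ℝ) (q r : ℕ)
    (hc : ErrCorrectable Φ q) (hqr : q ≤ r) (hr2q : r ≤ 2 * q)
    (x : Fin n → ℝ) (e v : Fin p × Fin n → ℝ) (vmax : ℝ)
    (he : Sparse q e) (hv : ∀ i : Fin p, SecureEst.enorm (blk v i) ≤ vmax)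
    (zhat : Fin p × Fin n → ℝ) (hz : zhat = Φ.mulVec x + e + v)
    (xhat : Fin n → ℝ)
    (hcount : q < (Finset.univ.filter fun i : Fin p =>
        theta Φ q r * vmax < SecureEst.enorm (blk zhat i - (rowBlk Φ i).mulVec xhat)).card) :
    kappaC' Φ q r * vmax < SecureEst.enorm (xhat - x) :=
  many_large_residuals_implies_far_general Φ q r x e v vmax he hv zhat hz xhat hcount
end
end

section
/- Let A ∈ ℝ^{n×n} and C ∈ ℝ^{p×n} with rows c₁,…,c_p, and let G ∈ ℝ^{np×n} be the stacked observability matrix with row-blocks G_i = [c_iᵀ (c_iA)ᵀ ⋯ (c_iA^{n−1})ᵀ]ᵀ. Then the dynamic security index satisfies α_d(A, C) = min over normalized complex eigenvectors v ∈ V(A) of ‖Cv‖₀ = min over nonzero x ∈ ℝⁿ of ‖Gx‖_{0ⁿ} = cospark^n(G). -/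
open scoped Classical
open Finset Matrix

noncomputable section

/-!
If `v` is a complex eigenvector of `A` and `(Cv)ᵢ = 0`, then `cᵢ Aᵏ v = λᵏ (Cv)ᵢ = 0` for every
`k`; the real and imaginary parts of `v` inherit this, and one of them is a nonzero real `x` with
`‖Gx‖_{0ⁿ} ≤ ‖Cv‖₀`. Conversely, for real `x ≠ 0` let `Λ` be the set of zero blocks of `Gx`. The
states whose outputs through the rows in `Λ` vanish at all times form an `A`-invariant subspace,
which by Cayley–Hamilton contains `x`; over `ℂ` it therefore contains an eigenvector `v`, and
`(Cv)ᵢ = 0` for `i ∈ Λ`.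
-/

open Polynomial in
theorem Matrix.pow_mem_span_pow_lt_card {ι R : Type*} [Fintype ι] [DecidableEq ι] [CommRing R]
    [Nontrivial R] (M : Matrix ι ι R) (k : ℕ) :
    M ^ k ∈ Submodule.span R (Set.range fun i : Fin (Fintype.card ι) => M ^ (i : ℕ)) := by
  have hdeg : X ^ k %ₘ M.charpoly ∈ degreeLT R (Fintype.card ι) := by
    rw [mem_degreeLT, ← M.charpoly_degree_eq_dim]
    exact degree_modByMonic_lt _ M.charpoly_monic
  rw [degreeLT_eq_span_X_pow] at hdeg
  have hmap := Submodule.mem_map_of_mem (f := (aeval M).toLinearMap) hdeg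
  rw [Submodule.map_span] at hmap
  have hset : (Set.range fun i : Fin (Fintype.card ι) => M ^ (i : ℕ)) =
      (aeval M).toLinearMap ''
        (((Finset.range (Fintype.card ι)).image (X ^ ·) : Finset R[X]) : Set R[X]) := by
    ext
    simp [Fin.exists_iff]
  rw [M.pow_eq_aeval_mod_charpoly k, hset]
  exact hmap

theorem Matrix.pow_mulVec_of_mulVec_eq_smul {ι K : Type*} [Fintype ι] [DecidableEq ι]
    [CommSemiring K] {A : Matrix ι ι K} {μ : K} {v : ι → K} (h : A *ᵥ v = μ • v) (k : ℕ) :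
    (A ^ k) *ᵥ v = μ ^ k • v := by
  induction k with
  | zero => simp
  | succ k ih => rw [pow_succ, ← mulVec_mulVec, h, mulVec_smul, ih, smul_smul, ← pow_succ']

theorem Module.End.exists_hasEigenvector_mem {K V : Type*} [Field K] [IsAlgClosed K]
    [AddCommGroup V] [Module K V] [FiniteDimensional K V] (f : Module.End K V)
    {W : Submodule K V} (hW : W ≠ ⊥) (hfW : ∀ w ∈ W, f w ∈ W) :
    ∃ μ v, v ∈ W ∧ f.HasEigenvector μ v := by
  have := Submodule.nontrivial_iff_ne_bot.2 hW
  obtain ⟨μ, hμ⟩ := Module.End.exists_eigenvalue (f.restrict hfW)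
  obtain ⟨v, hv⟩ := hμ.exists_hasEigenvector
  exact ⟨μ, v, v.2, eigenspace_restrict_le_eigenspace f hfW μ ⟨v, hv.1, rfl⟩,
    fun h => hv.2 (Subtype.ext h)⟩

theorem Nat.sInf_eq_of_forall_exists_le {S T : Set ℕ} (hST : ∀ m ∈ S, ∃ m' ∈ T, m' ≤ m)
    (hTS : ∀ m ∈ T, ∃ m' ∈ S, m' ≤ m) : sInf S = sInf T := by
  have key : ∀ {S T : Set ℕ}, (∀ m ∈ T, ∃ m' ∈ S, m' ≤ m) → T.Nonempty → sInf S ≤ sInf T :=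
    fun h hT => by
      obtain ⟨m, hm, hle⟩ := h _ (Nat.sInf_mem hT)
      exact (Nat.sInf_le hm).trans hle
  rcases S.eq_empty_or_nonempty with rfl | ⟨m, hm⟩
  · rcases T.eq_empty_or_nonempty with rfl | ⟨m, hm⟩
    · rfl
    · obtain ⟨_, h, -⟩ := hTS m hm
      exact absurd h (Set.notMem_empty _)
  · obtain ⟨m', hm', -⟩ := hST m hm
    exact le_antisymm (key hTS ⟨m', hm'⟩) (key hST ⟨m, hm⟩)

section Complexification

variable {ι κ ο : Type*} [Fintype ι]

theorem Matrix.map_ofReal_pow [DecidableEq ι] (A : Matrix ι ι ℝ) (k : ℕ) :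
    (A ^ k).map Complex.ofReal = A.map Complex.ofReal ^ k :=
  A.map_pow Complex.ofRealHom k

theorem Matrix.map_ofReal_mul (L : Matrix κ ι ℝ) (M : Matrix ι ο ℝ) :
    (L * M).map Complex.ofReal = L.map Complex.ofReal * M.map Complex.ofReal :=
  Matrix.map_mul (f := Complex.ofRealHom)

theorem Matrix.map_ofReal_mulVec_apply (M : Matrix κ ι ℝ) (x : ι → ℝ) (i : κ) :
    (M.map Complex.ofReal *ᵥ fun j => (x j : ℂ)) i = ((M *ᵥ x) i : ℂ) :=
  (Complex.ofRealHom.map_mulVec M x i).symm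

theorem Matrix.re_map_ofReal_mulVec_apply (M : Matrix κ ι ℝ) (v : ι → ℂ) (i : κ) :
    ((M.map Complex.ofReal *ᵥ v) i).re = (M *ᵥ fun j => (v j).re) i := by
  simp [mulVec, dotProduct, Complex.re_sum]

theorem Matrix.im_map_ofReal_mulVec_apply (M : Matrix κ ι ℝ) (v : ι → ℂ) (i : κ) :
    ((M.map Complex.ofReal *ᵥ v) i).im = (M *ᵥ fun j => (v j).im) i := by
  simp [mulVec, dotProduct, Complex.im_sum]

end Complexification

section Unobservable

variable {ι κ R : Type*} [Fintype ι] [DecidableEq ι] [CommRing R]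

def unobservableSubspace (A : Matrix ι ι R) (C : Matrix κ ι R) (s : Set κ) :
    Submodule R (ι → R) :=
  ⨅ (k : ℕ) (i ∈ s), LinearMap.ker (LinearMap.proj i ∘ₗ (C * A ^ k).mulVecLin)

theorem mem_unobservableSubspace {A : Matrix ι ι R} {C : Matrix κ ι R} {s : Set κ}
    {w : ι → R} :
    w ∈ unobservableSubspace A C s ↔ ∀ k : ℕ, ∀ i ∈ s, ((C * A ^ k) *ᵥ w) i = 0 := by
  simp [unobservableSubspace]

theorem mulVec_mem_unobservableSubspace {A : Matrix ι ι R} {C : Matrix κ ι R} {s : Set κ}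
    {w : ι → R} (hw : w ∈ unobservableSubspace A C s) :
    A *ᵥ w ∈ unobservableSubspace A C s := by
  rw [mem_unobservableSubspace] at hw ⊢
  intro k i hi
  rw [mulVec_mulVec, Matrix.mul_assoc, ← pow_succ]
  exact hw (k + 1) i hi

end Unobservable

namespace SecureEst

variable {n p : ℕ}

theorem enormC_eq_norm {m : Type*} [Fintype m] (v : m → ℂ) :
    enormC v = ‖WithLp.toLp 2 v‖ := by
  rw [EuclideanSpace.norm_eq]
  rfl

theorem inv_enormC_smul_mem_eigSet {A : Matrix (Fin n) (Fin n) ℝ} {μ : ℂ} {v : Fin n → ℂ}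
    (hv : Module.End.HasEigenvector (A.map Complex.ofReal).mulVecLin μ v) :
    ((enormC v)⁻¹ : ℂ) • v ∈ eigSet A := by
  have hpos : 0 < enormC v := by
    rw [enormC_eq_norm, norm_pos_iff]
    exact fun h => hv.2 (congrArg WithLp.ofLp h)
  refine ⟨⟨μ, ?_⟩, ?_⟩
  · rw [mulVec_smul, ← mulVecLin_apply, hv.apply_eq_smul, smul_comm]
  · rw [enormC_eq_norm, WithLp.toLp_smul, norm_smul, ← enormC_eq_norm, ← Complex.ofReal_inv,
      Complex.norm_of_nonneg (inv_nonneg.2 hpos.le), inv_mul_cancel₀ hpos.ne']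

theorem blk_obsG_mulVec_eq_zero_iff {A : Matrix (Fin n) (Fin n) ℝ}
    {C : Matrix (Fin p) (Fin n) ℝ} {x : Fin n → ℝ} {i : Fin p} :
    blk (obsG A C *ᵥ x) i = 0 ↔ ∀ k : ℕ, ((C * A ^ k) *ᵥ x) i = 0 := by
  have hblk : ∀ j : Fin n, blk (obsG A C *ᵥ x) i j = ((C * A ^ (j : ℕ)) *ᵥ x) i := fun _ => rfl
  refine ⟨fun h k => ?_, fun h => funext fun j => (hblk j).trans (h j)⟩
  have hk := A.pow_mem_span_pow_lt_card k
  rw [Fintype.card_fin] at hk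
  refine Submodule.span_induction (p := fun M _ => ((C * M) *ᵥ x) i = 0) ?_ ?_ ?_ ?_ hk
  · rintro _ ⟨j, rfl⟩
    exact (hblk j).symm.trans (congrFun h j)
  · simp
  · intro M N _ _ hM hN
    simp [Matrix.mul_add, Matrix.add_mulVec, hM, hN]
  · intro c M _ hM
    simp [Matrix.mul_smul, Matrix.smul_mulVec, hM]

theorem l0n_obsG_mulVec_le_l0C {A : Matrix (Fin n) (Fin n) ℝ} {C : Matrix (Fin p) (Fin n) ℝ}
    {x : Fin n → ℝ} {y : Fin p → ℂ} (h : ∀ i, y i = 0 → ∀ k : ℕ, ((C * A ^ k) *ᵥ x) i = 0) :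
    l0n (obsG A C *ᵥ x) ≤ l0C y := by
  refine Finset.card_le_card fun i => ?_
  simp only [blockSupp, Finset.mem_filter, Finset.mem_univ, true_and]
  exact mt fun hi => blk_obsG_mulVec_eq_zero_iff.mpr (h i hi)

theorem exists_l0n_obsG_mulVec_le_l0C {A : Matrix (Fin n) (Fin n) ℝ}
    (C : Matrix (Fin p) (Fin n) ℝ) {v : Fin n → ℂ} (hv : v ∈ eigSet A) :
    ∃ x : Fin n → ℝ, x ≠ 0 ∧ l0n (obsG A C *ᵥ x) ≤ l0C (C.map Complex.ofReal *ᵥ v) := by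
  obtain ⟨⟨μ, hμ⟩, hnorm⟩ := hv
  have hv0 : v ≠ 0 := by
    rintro rfl
    simp [enormC] at hnorm
  have hout : ∀ i, (C.map Complex.ofReal *ᵥ v) i = 0 →
      ∀ k : ℕ, ((C * A ^ k).map Complex.ofReal *ᵥ v) i = 0 := by
    intro i hi k
    rw [map_ofReal_mul, map_ofReal_pow, ← mulVec_mulVec, pow_mulVec_of_mulVec_eq_smul hμ,
      mulVec_smul, Pi.smul_apply, hi, smul_zero]
  by_cases hre : (fun j => (v j).re) = 0
  · refine ⟨fun j => (v j).im, fun him => hv0 ?_, l0n_obsG_mulVec_le_l0C fun i hi k => ?_⟩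
    · exact funext fun j => Complex.ext (congrFun hre j) (congrFun him j)
    · rw [← im_map_ofReal_mulVec_apply, hout i hi k, Complex.zero_im]
  · refine ⟨_, hre, l0n_obsG_mulVec_le_l0C fun i hi k => ?_⟩
    rw [← re_map_ofReal_mulVec_apply, hout i hi k, Complex.zero_re]

theorem exists_l0C_le_l0n_obsG_mulVec (A : Matrix (Fin n) (Fin n) ℝ)
    (C : Matrix (Fin p) (Fin n) ℝ) {x : Fin n → ℝ} (hx : x ≠ 0) :
    ∃ v ∈ eigSet A, l0C (C.map Complex.ofReal *ᵥ v) ≤ l0n (obsG A C *ᵥ x) := by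
  set W := unobservableSubspace (A.map Complex.ofReal) (C.map Complex.ofReal)
    {i | blk (obsG A C *ᵥ x) i = 0}
  have hxW : (fun j => (x j : ℂ)) ∈ W := by
    refine mem_unobservableSubspace.2 fun k i hi => ?_
    rw [← map_ofReal_pow, ← map_ofReal_mul, map_ofReal_mulVec_apply,
      blk_obsG_mulVec_eq_zero_iff.mp hi k, Complex.ofReal_zero]
  have hW : W ≠ ⊥ := fun h => hx <| funext fun j => by
    simpa using congrFun ((Submodule.eq_bot_iff W).1 h _ hxW) j
  obtain ⟨μ, v, hvW, hv⟩ := Module.End.exists_hasEigenvector_mem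
    (A.map Complex.ofReal).mulVecLin hW fun w hw => mulVec_mem_unobservableSubspace hw
  refine ⟨_, inv_enormC_smul_mem_eigSet hv, Finset.card_le_card fun i => ?_⟩
  simp only [blockSupp, Finset.mem_filter, Finset.mem_univ, true_and]
  refine mt fun hi => ?_
  have hCv : (C.map Complex.ofReal *ᵥ v) i = 0 := by
    simpa using mem_unobservableSubspace.1 hvW 0 i hi
  rw [mulVec_smul, Pi.smul_apply, hCv, smul_zero]

end SecureEst

open SecureEst in
/-- Proposition 5: the dynamic security index equals the minimum of
`‖Gx‖_{0ⁿ}` over nonzero real `x`, i.e. the `n`-stacked cospark of `G`. -/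
theorem alphaD_eq_cosparkN {n p : ℕ}
    (A : Matrix (Fin n) (Fin n) ℝ) (C : Matrix (Fin p) (Fin n) ℝ) :
    alphaD A C =
        sInf {m : ℕ | ∃ x : Fin n → ℝ, x ≠ 0 ∧ m = l0n ((obsG A C).mulVec x)} ∧
      alphaD A C = cosparkN (obsG A C) := by
  have h : alphaD A C = cosparkN (obsG A C) := by
    refine Nat.sInf_eq_of_forall_exists_le ?_ ?_
    · rintro _ ⟨v, hv, rfl⟩
      obtain ⟨x, hx, hle⟩ := exists_l0n_obsG_mulVec_le_l0C C hv
      exact ⟨_, ⟨x, hx, rfl⟩, hle⟩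
    · rintro _ ⟨x, hx, rfl⟩
      obtain ⟨v, hv, hle⟩ := exists_l0C_le_l0n_obsG_mulVec A C hx
      exact ⟨_, ⟨v, hv, rfl⟩, hle⟩
  exact ⟨h, h⟩
end
end

section
/- Let G ∈ ℝ^{np×n} be a real matrix viewed in p row-blocks. Then the minimum of ‖Gx‖_{0ⁿ} over nonzero x ∈ ℂⁿ equals the minimum of ‖Gx‖_{0ⁿ} over nonzero x ∈ ℝⁿ; that is, extending the stacked cospark minimization from real to complex vectors does not change its value. -/
open scoped Classical
open Finset Matrix

noncomputable section

/-! A nonzero complex vector `x` has a nonzero real or imaginary part, and since `G` is real,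
`G (Re x)` and `G (Im x)` are the real and imaginary parts of `G x`; each of them therefore has at
most as many nonzero blocks as `G x`. Conversely a real vector is a complex vector with the same
stacked support. -/

namespace SecureEst

variable {n p : ℕ}

section RealParts

variable {m k : Type*} [Fintype k]

theorem re_mulVec_map_ofReal (M : Matrix m k ℝ) (x : k → ℂ) (i : m) :
    (((M.map Complex.ofReal) *ᵥ x) i).re = (M *ᵥ fun j => (x j).re) i := by
  simp [Matrix.mulVec, dotProduct, Complex.re_sum]

theorem im_mulVec_map_ofReal (M : Matrix m k ℝ) (x : k → ℂ) (i : m) :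
    (((M.map Complex.ofReal) *ᵥ x) i).im = (M *ᵥ fun j => (x j).im) i := by
  simp [Matrix.mulVec, dotProduct, Complex.im_sum]

theorem re_ne_zero_or_im_ne_zero {x : k → ℂ} (hx : x ≠ 0) :
    (fun j => (x j).re) ≠ 0 ∨ (fun j => (x j).im) ≠ 0 := by
  by_contra! h
  exact hx <| funext fun j => Complex.ext (congrFun h.1 j) (congrFun h.2 j)

end RealParts

theorem l0n_le_l0nC {w : Fin p × Fin n → ℝ} {z : Fin p × Fin n → ℂ}
    (h : ∀ ij, z ij = 0 → w ij = 0) : l0n w ≤ l0nC z := by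
  refine Finset.card_le_card fun i => ?_
  simp only [blockSupp, Finset.mem_filter, Finset.mem_univ, true_and]
  exact mt fun hz => funext fun j => h (i, j) (congrFun hz j)

theorem l0nC_ofReal (w : Fin p × Fin n → ℝ) : l0nC (fun ij => (w ij : ℂ)) = l0n w := by
  simp only [l0nC, l0n, blockSupp, blk, ne_eq, funext_iff, Pi.zero_apply, Complex.ofReal_eq_zero]

theorem l0n_mulVec_re_le (G : Matrix (Fin p × Fin n) (Fin n) ℝ) (x : Fin n → ℂ) :
    l0n (G *ᵥ fun j => (x j).re) ≤ l0nC ((G.map Complex.ofReal) *ᵥ x) :=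
  l0n_le_l0nC fun ij h => by rw [← re_mulVec_map_ofReal, h, Complex.zero_re]

theorem l0n_mulVec_im_le (G : Matrix (Fin p × Fin n) (Fin n) ℝ) (x : Fin n → ℂ) :
    l0n (G *ᵥ fun j => (x j).im) ≤ l0nC ((G.map Complex.ofReal) *ᵥ x) :=
  l0n_le_l0nC fun ij h => by rw [← im_mulVec_map_ofReal, h, Complex.zero_im]

theorem l0nC_mulVec_ofReal (G : Matrix (Fin p × Fin n) (Fin n) ℝ) (x : Fin n → ℝ) :
    l0nC ((G.map Complex.ofReal) *ᵥ fun j => (x j : ℂ)) = l0n (G *ᵥ x) := by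
  rw [← l0nC_ofReal]
  congr 1
  funext ij
  exact (RingHom.map_mulVec Complex.ofRealHom G x ij).symm

end SecureEst

open SecureEst in
/-- the `n`-stacked cospark minimization of a real matrix `G` over
nonzero complex vectors has the same value as over nonzero real vectors. -/
theorem complex_cospark_eq_real_cospark {n p : ℕ}
    (G : Matrix (Fin p × Fin n) (Fin n) ℝ) :
    sInf {m : ℕ | ∃ x : Fin n → ℂ, x ≠ 0 ∧
        m = l0nC ((G.map Complex.ofReal).mulVec x)} =
      sInf {m : ℕ | ∃ x : Fin n → ℝ, x ≠ 0 ∧ m = l0n (G.mulVec x)} := by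
  refine csInf_eq_csInf_of_forall_exists_le ?_ ?_
  · rintro _ ⟨x, hx, rfl⟩
    rcases re_ne_zero_or_im_ne_zero hx with hre | him
    · exact ⟨_, ⟨_, hre, rfl⟩, l0n_mulVec_re_le G x⟩
    · exact ⟨_, ⟨_, him, rfl⟩, l0n_mulVec_im_le G x⟩
  · rintro _ ⟨x, hx, rfl⟩
    have hx' : (fun j => (x j : ℂ)) ≠ 0 := fun h =>
      hx <| funext fun j => Complex.ofReal_eq_zero.mp (congrFun h j)
    exact ⟨_, ⟨_, hx', rfl⟩, (l0nC_mulVec_ofReal G x).le⟩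
end
end
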